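/- Let X be a string of length n over a finite alphabet, partitioned into ℓ consecutive blocks X_1 ⋯ X_ℓ, and also partitioned into m consecutive blocks X^b_1 ⋯ X^b_m each of length at most b. Then Σ_{i=1}^m |X^b_i|·H₀(X^b_i) ≤ Σ_{i=1}^ℓ |X_i|·H₀(X_i) + (ℓ - 1)·b, where H₀ denotes the 0-th order empirical entropy of a string. -/

import Mathlib

/-!
Scan both partitions from the left. A block of `Xb` ending inside the current part `X₁` is
split off from `X₁`, which can only lower the total: `S ↦ |S| H₀(S)` is superadditive under
concatenation (the log-sum inequality). A block running past the end of `X₁` is cut there,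
which costs at most its length `≤ b`: cutting `ST` into `S` and `T` loses at most
`(|S| + |T|) h(|S| / (|S| + |T|)) ≤ |S| + |T|` bits, `h` the binary entropy. Each of the
`ℓ - 1` boundaries of `Xs` is cut at most once.
-/

open Real

/-- The unnormalized 0-th order empirical entropy `|S|·H₀(S)` of a string `S`
over a finite alphabet: `∑_c n_c log₂(n/n_c)` where `n = |S|` and `n_c` is the
number of occurrences of `c` in `S` (convention `0·log(x/0) = 0`). -/
noncomputable def lenH0 {A : Type} [Fintype A] [DecidableEq A] (S : List A) : ℝ :=
  ∑ c : A, (S.count c : ℝ) * logb 2 ((S.length : ℝ) / (S.count c : ℝ))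

namespace Real

theorem mul_log_div_add_mul_log_div_le {a b c d : ℝ} (ha : 0 ≤ a) (hab : a ≤ b) (hc : 0 ≤ c)
    (hcd : c ≤ d) : a * log (b / a) + c * log (d / c) ≤ (a + c) * log ((b + d) / (a + c)) := by
  rcases ha.eq_or_lt with rfl | ha
  · rcases hc.eq_or_lt with rfl | hc
    · simp
    · have : 0 < d / c := by have := hc.trans_le hcd; positivity
      simp only [zero_mul, zero_add]
      gcongr
      linarith
  rcases hc.eq_or_lt with rfl | hc
  · have : 0 < b / a := by have := ha.trans_le hab; positivity
    simp only [zero_mul, add_zero]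
    gcongr
    linarith
  have hb := ha.trans_le hab
  have hd := hc.trans_le hcd
  have hac : 0 < a + c := by positivity
  have key := strictConcaveOn_log_Ioi.concaveOn.2 (show 0 < b / a by positivity)
    (show 0 < d / c by positivity) (div_nonneg ha.le hac.le) (div_nonneg hc.le hac.le)
    (by field_simp)
  simp only [smul_eq_mul] at key
  calc a * log (b / a) + c * log (d / c)
      = (a + c) * (a / (a + c) * log (b / a) + c / (a + c) * log (d / c)) := by
        field_simp
    _ ≤ (a + c) * log ((b + d) / (a + c)) := by
        gcongr
        convert key using 2
        field_simp

theorem mul_log_div_le_mul_log_div_add_mul_log_div {a a' b y : ℝ} (ha : 0 ≤ a) (haa' : a ≤ a')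
    (hab : a ≤ b) (hby : b ≤ y) : a * log (y / a') ≤ a * log (b / a) + a * log (y / b) := by
  rcases ha.eq_or_lt with rfl | ha
  · simp
  have hb := ha.trans_le hab
  have hy := hb.trans_le hby
  have ha' := ha.trans_le haa'
  rw [← mul_add, ← log_mul (by positivity) (by positivity), div_mul_div_comm, mul_comm b y,
    mul_div_mul_right _ _ hb.ne']
  gcongr

theorem add_mul_log_div_add_le {a b c d : ℝ} (ha : 0 ≤ a) (hab : a ≤ b) (hc : 0 ≤ c)
    (hcd : c ≤ d) : (a + c) * log ((b + d) / (a + c)) ≤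
      a * log (b / a) + c * log (d / c) + (a * log ((b + d) / b) + c * log ((b + d) / d)) := by
  have hA := mul_log_div_le_mul_log_div_add_mul_log_div ha (le_add_of_nonneg_right hc) hab
    (le_add_of_nonneg_right (hc.trans hcd))
  have hC := mul_log_div_le_mul_log_div_add_mul_log_div hc (le_add_of_nonneg_left ha) hcd
    (le_add_of_nonneg_left (ha.trans hab))
  linarith [add_mul a c (log ((b + d) / (a + c)))]

theorem mul_log_add_div_add_mul_log_add_div_le {s t : ℝ} (hs : 0 ≤ s) (ht : 0 ≤ t) :
    s * log ((s + t) / s) + t * log ((s + t) / t) ≤ (s + t) * log 2 := by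
  rcases (add_nonneg hs ht).eq_or_lt with h | hst
  · obtain ⟨rfl, rfl⟩ : s = 0 ∧ t = 0 := ⟨by linarith, by linarith⟩
    simp
  have h := mul_le_mul_of_nonneg_left (binEntropy_le_log_two (p := s / (s + t))) hst.le
  refine le_of_eq_of_le ?_ h
  have : 1 - s / (s + t) = t / (s + t) := by field_simp; ring
  simp only [binEntropy, this, inv_div]
  field_simp

end Real

theorem List.append_eq_append_iff_ne_nil {α : Type*} {a b c d : List α} :
    a ++ b = c ++ d ↔
      (∃ m, c = a ++ m ∧ b = m ++ d) ∨ ∃ m, m ≠ [] ∧ a = c ++ m ∧ d = m ++ b := by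
  rw [List.append_eq_append_iff]
  constructor
  · rintro (h | ⟨m, rfl, rfl⟩)
    · exact .inl h
    · rcases eq_or_ne m [] with rfl | hm
      · exact .inl ⟨[], by simp, by simp⟩
      · exact .inr ⟨m, hm, rfl, rfl⟩
  · rintro (h | ⟨m, -, h⟩)
    · exact .inl h
    · exact .inr ⟨m, h⟩

section Entropy

variable {A : Type} [Fintype A] [DecidableEq A]

theorem List.sum_count_eq_length (S : List A) : ∑ c : A, S.count c = S.length := by
  simpa using Multiset.sum_count_eq_card (s := Finset.univ) (m := (S : Multiset A)) (by simp)

theorem lenH0_eq_sum_mul_log_div (S : List A) :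
    lenH0 S = (∑ c : A, (S.count c : ℝ) * log (S.length / S.count c)) / log 2 := by
  simp only [lenH0, logb, Finset.sum_div, mul_div_assoc]

theorem lenH0_nonneg (S : List A) : 0 ≤ lenH0 S := by
  rw [lenH0_eq_sum_mul_log_div]
  refine div_nonneg (Finset.sum_nonneg fun c _ => ?_) (log_nonneg one_le_two)
  rcases (S.count c).eq_zero_or_pos with h | h
  · simp [h]
  · have hle : (S.count c : ℝ) ≤ S.length := by exact_mod_cast S.count_le_length
    have hpos : (0 : ℝ) < S.count c := by exact_mod_cast h
    exact mul_nonneg hpos.le (log_nonneg ((one_le_div hpos).2 hle))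

theorem lenH0_add_le_lenH0_append (S T : List A) : lenH0 S + lenH0 T ≤ lenH0 (S ++ T) := by
  simp only [lenH0_eq_sum_mul_log_div, ← add_div, ← Finset.sum_add_distrib]
  gcongr with c
  simpa [List.count_append] using mul_log_div_add_mul_log_div_le (Nat.cast_nonneg (S.count c))
    (Nat.cast_le.2 S.count_le_length) (Nat.cast_nonneg (T.count c))
    (Nat.cast_le.2 T.count_le_length)

theorem lenH0_append_le (S T : List A) :
    lenH0 (S ++ T) ≤ lenH0 S + lenH0 T + (S.length + T.length) := by
  set s : ℝ := (S.length : ℝ)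
  set t : ℝ := (T.length : ℝ)
  have hterm (c : A) : ((S ++ T).count c : ℝ) * log ((S ++ T).length / (S ++ T).count c) ≤
      (S.count c * log (s / S.count c) + T.count c * log (t / T.count c)) +
        (S.count c * log ((s + t) / s) + T.count c * log ((s + t) / t)) := by
    simpa [List.count_append] using add_mul_log_div_add_le (Nat.cast_nonneg (S.count c))
      (Nat.cast_le.2 S.count_le_length) (Nat.cast_nonneg (T.count c))
      (Nat.cast_le.2 T.count_le_length)
  calc lenH0 (S ++ T)
      ≤ (∑ c : A, ((S.count c * log (s / S.count c) + T.count c * log (t / T.count c)) +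
          (S.count c * log ((s + t) / s) + T.count c * log ((s + t) / t)))) / log 2 := by
        rw [lenH0_eq_sum_mul_log_div]
        gcongr with c
        exact hterm c
    _ = lenH0 S + lenH0 T + (s * log ((s + t) / s) + t * log ((s + t) / t)) / log 2 := by
        simp only [Finset.sum_add_distrib, ← Finset.sum_mul, ← Nat.cast_sum,
          List.sum_count_eq_length, lenH0_eq_sum_mul_log_div]
        ring
    _ ≤ lenH0 S + lenH0 T + (s + t) := by
        gcongr
        rw [div_le_iff₀ (log_pos one_lt_two)]
        exact mul_log_add_div_add_mul_log_add_div_le (Nat.cast_nonneg _) (Nat.cast_nonneg _)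

end Entropy

/-- **fixed block compression boosting.**
If a string `X` is partitioned into `ℓ ≥ 1` consecutive blocks `X_1 ⋯ X_ℓ` and also
into consecutive blocks `X^b_1 ⋯ X^b_m` each of length at most `b`, then
`∑_i |X^b_i| H₀(X^b_i) ≤ ∑_i |X_i| H₀(X_i) + (ℓ - 1) b`. -/
theorem fixed_block_compression_boosting
    {A : Type} [Fintype A] [DecidableEq A]
    (Xs Xb : List (List A)) (b : ℕ)
    (hXs : Xs ≠ [])
    (hjoin : Xb.flatten = Xs.flatten)
    (hlen : ∀ B ∈ Xb, B.length ≤ b) :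
    (Xb.map lenH0).sum ≤ (Xs.map lenH0).sum + ((Xs.length : ℝ) - 1) * (b : ℝ) := by
  induction hn : Xb.length + Xs.length using Nat.strong_induction_on generalizing Xs Xb with
  | _ n ih =>
  obtain ⟨X₁, Xs, rfl⟩ := List.exists_cons_of_ne_nil hXs
  rcases Xb with _ | ⟨B, Xb⟩
  · have hsum_nonneg : 0 ≤ ((X₁ :: Xs).map lenH0).sum :=
      List.sum_nonneg (by simpa using ⟨lenH0_nonneg X₁, fun X _ => lenH0_nonneg X⟩)
    simp only [List.map_nil, List.sum_nil, List.length_cons, Nat.cast_succ, add_sub_cancel_right]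
    positivity
  simp only [List.mem_cons, forall_eq_or_imp] at hlen
  simp only [List.flatten_cons, List.append_eq_append_iff_ne_nil] at hjoin
  rcases hjoin with ⟨M, rfl, hM⟩ | ⟨C, hC, rfl, hCs⟩
  · have ih_rest := ih _ (by simp [← hn]) (M :: Xs) Xb (List.cons_ne_nil _ _)
      (by simpa using hM) hlen.2 rfl
    have hsplit := lenH0_add_le_lenH0_append B M
    simp only [List.map_cons, List.sum_cons, List.length_cons] at ih_rest ⊢
    linarith
  · rw [List.length_append] at hlen
    have hXs : Xs ≠ [] := by rintro rfl; simp_all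
    have ih_rest := ih _ (by simp [← hn]) Xs (C :: Xb) hXs (by simpa using hCs.symm)
      (by simpa using ⟨(Nat.le_add_left _ _).trans hlen.1, hlen.2⟩) rfl
    have hcut := lenH0_append_le X₁ C
    have hB : (X₁.length : ℝ) + C.length ≤ b := by exact_mod_cast hlen.1
    simp only [List.map_cons, List.sum_cons, List.length_cons, Nat.cast_succ] at ih_rest ⊢
    linarith
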